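/- Let c be a positive integer. In a graph there is no strictly descending infinite sequence C₁ ⊋ C₂ ⊋ ... of connected vertex sets with non-empty intersection such that |NCₙ| < c for all n. -/

import Mathlib

variable {V : Type*}

/-- The boundary `NC` of a vertex set: vertices outside `C` adjacent to `C`. -/
def bdry (G : SimpleGraph V) (C : Set V) : Set V :=
  {v | v ∉ C ∧ ∃ u ∈ C, G.Adj u v}

/-- The `*`-complement: `C* = VX \ (C ∪ NC)`. -/
def cstar (G : SimpleGraph V) (C : Set V) : Set V :=
  (C ∪ bdry G C)ᶜ

/-- A set of vertices is connected if its induced subgraph is connected. -/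
def ConnSet (G : SimpleGraph V) (C : Set V) : Prop :=
  (G.induce C).Connected

/-- `Q` is a component of `A`: a maximal connected subset of `A`. -/
def IsCompOf (G : SimpleGraph V) (Q A : Set V) : Prop :=
  Q ⊆ A ∧ ConnSet G Q ∧ ∀ R : Set V, Q ⊆ R → R ⊆ A → ConnSet G R → R = Q

/-- `A`, `B` form a pair of opposite corners of `C` and `D`. -/
def OppCorners (G : SimpleGraph V) (C D A B : Set V) : Prop :=
  (A = C ∩ D ∧ B = cstar G C ∩ cstar G D) ∨
  (A = cstar G C ∩ cstar G D ∧ B = C ∩ D) ∨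
  (A = C ∩ cstar G D ∧ B = cstar G C ∩ D) ∨
  (A = cstar G C ∩ D ∧ B = C ∩ cstar G D)

/-- Cut system (Definition 2.1). -/
structure IsCutSystem (G : SimpleGraph V) (𝒞 : Set (Set V)) : Prop where
  nonempty : ∀ C ∈ 𝒞, C.Nonempty
  conn : ∀ C ∈ 𝒞, ConnSet G C
  finBd : ∀ C ∈ 𝒞, (bdry G C).Finite
  star_star : ∀ C ∈ 𝒞, cstar G (cstar G C) = C
  a1 : ∀ C ∈ 𝒞, ∀ D ∈ 𝒞, ∀ A B : Set V, OppCorners G C D A B →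
    (∃ E ∈ 𝒞, E ⊆ A) → (∃ E ∈ 𝒞, E ⊆ B) →
    ∀ Q : Set V, (IsCompOf G Q A ∨ IsCompOf G Q B) → (∃ E ∈ 𝒞, E ⊆ Q) → Q ∈ 𝒞
  a2 : ∀ C ∈ 𝒞, ∀ D ∈ 𝒞, ∃ A B : Set V, OppCorners G C D A B ∧
    (∃ E ∈ 𝒞, E ⊆ A) ∧ (∃ E ∈ 𝒞, E ⊆ B)

/-- A thin cut system: all cuts have boundary of the minimal cardinality `κ`. -/
structure IsThinCutSystem (G : SimpleGraph V) (𝒞 : Set (Set V)) (κ : ℕ) : Prop where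
  toIsCutSystem : IsCutSystem G 𝒞
  thin : ∀ C ∈ 𝒞, (bdry G C).ncard = κ

/-- A pre-cut: a cut or the `*`-complement of a cut. -/
def PreCut (G : SimpleGraph V) (𝒞 : Set (Set V)) (E : Set V) : Prop :=
  E ∈ 𝒞 ∨ ∃ C ∈ 𝒞, E = cstar G C

/-- `A` is an isolated corner of the pair `C`, `D`: a corner containing no cut,
whose two adjacent links are empty. -/
def IsolatedCorner (G : SimpleGraph V) (𝒞 : Set (Set V)) (C D A : Set V) : Prop :=
  (¬ ∃ E ∈ 𝒞, E ⊆ A) ∧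
  ((A = C ∩ D ∧ C ∩ bdry G D = ∅ ∧ D ∩ bdry G C = ∅) ∨
   (A = C ∩ cstar G D ∧ C ∩ bdry G D = ∅ ∧ cstar G D ∩ bdry G C = ∅) ∨
   (A = cstar G C ∩ D ∧ cstar G C ∩ bdry G D = ∅ ∧ D ∩ bdry G C = ∅) ∨
   (A = cstar G C ∩ cstar G D ∧ cstar G C ∩ bdry G D = ∅ ∧ cstar G D ∩ bdry G C = ∅))

/-- Two sets are nested if they have an isolated corner. -/
def Nested (G : SimpleGraph V) (𝒞 : Set (Set V)) (C D : Set V) : Prop :=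
  ∃ A : Set V, IsolatedCorner G 𝒞 C D A

/-- A slice: a component of the complement of a separator which is not a cut. -/
def IsSlice (G : SimpleGraph V) (𝒞 : Set (Set V)) (Q : Set V) : Prop :=
  (∃ C ∈ 𝒞, IsCompOf G Q (bdry G C)ᶜ) ∧ Q ∉ 𝒞

/-- `Y` is `k`-inseparable (Definition 2.12). -/
def Insep (G : SimpleGraph V) (k : ℕ) (Y : Set V) : Prop :=
  (Y.Infinite ∨ k + 1 ≤ Y.ncard) ∧
  ∀ C : Set V, (bdry G C).Finite → (bdry G C).ncard ≤ k →
    Y ⊆ C ∪ bdry G C ∨ Y ⊆ cstar G C ∪ bdry G C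

/-- `C` separates `Y₁` from `Y₂` (Definition 2.10, one orientation). -/
def Separates (G : SimpleGraph V) (C Y₁ Y₂ : Set V) : Prop :=
  Y₁ ⊆ C ∪ bdry G C ∧ Y₂ ⊆ cstar G C ∪ bdry G C ∧
  ¬ Y₁ ⊆ bdry G C ∧ ¬ Y₂ ⊆ bdry G C

/-- The set `S` separates the vertices `x` and `y`. -/
def SepVert (G : SimpleGraph V) (S : Set V) (x y : V) : Prop :=
  x ∉ S ∧ y ∉ S ∧ ∀ K : Set V, IsCompOf G K Sᶜ → x ∈ K → y ∉ K

/-- `S` is a tight `x`-`y`-separator. -/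
def TightSep (G : SimpleGraph V) (x y : V) (S : Set V) : Prop :=
  ∃ A B : Set V, IsCompOf G A Sᶜ ∧ IsCompOf G B Sᶜ ∧ A ≠ B ∧ x ∈ A ∧ y ∈ B ∧
    ∀ s ∈ S, (∃ a ∈ A, G.Adj s a) ∧ (∃ b ∈ B, G.Adj s b)

/-- `μ(C)`: the number of cuts of the system not nested with `C`. -/
noncomputable def mu (G : SimpleGraph V) (𝒞 : Set (Set V)) (C : Set V) : ℕ :=
  {D ∈ 𝒞 | ¬ Nested G 𝒞 C D}.ncard


private lemma C_mono {C : ℕ → Set V} (hdesc : ∀ n, C (n + 1) ⊂ C n)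
    {m n : ℕ} (h : m ≤ n) : C n ⊆ C m := by
  induction n, h using Nat.le_induction with
  | base => exact subset_rfl
  | succ n hmn ih => exact (hdesc n).subset.trans ih

private lemma cross {G : SimpleGraph V} {s D : Set V} :
    ∀ {a b : s} (W : (G.induce s).Walk a b), (a : V) ∉ D → (b : V) ∈ D →
      ∃ u ∈ W.support, (u : V) ∈ bdry G D := by
  intro a b W
  induction W with
  | nil => intro ha hb; exact absurd hb ha
  | @cons a a' b h p ih =>
    intro ha hb
    by_cases h' : (a' : V) ∈ D
    · refine ⟨a, by simp, ha, a', h', ?_⟩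
      have hadj : G.Adj (a : V) (a' : V) := h
      exact hadj.symm
    · obtain ⟨u, hu, hub⟩ := ih h' hb
      exact ⟨u, by simp [hu], hub⟩

private lemma aux : ∀ (c : ℕ) (G : SimpleGraph V) (C : ℕ → Set V),
    (∀ n, ConnSet G (C n)) → (∀ n, C (n + 1) ⊂ C n) →
    (∀ n, (bdry G (C n)).Finite ∧ (bdry G (C n)).ncard < c) →
    (⋂ n, C n).Nonempty → False := by
  intro c
  induction c with
  | zero => intro G C _ _ hbd _; exact absurd (hbd 0).2 (by omega)
  | succ c ih =>
    intro G C hconn hdesc hbd hint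
    classical
    by_cases hB : ∃ v N, ∀ n, N ≤ n → v ∈ bdry G (C n)
    · obtain ⟨v, N, hvN⟩ := hB
      set G' := G.deleteEdges {e | v ∈ e} with hG'
      have hbd' : ∀ m, v ∈ bdry G (C m) → bdry G' (C m) = bdry G (C m) \ {v} := by
        intro m hv
        ext w
        constructor
        · rintro ⟨hw, u, hu, hadj⟩
          rw [hG', SimpleGraph.deleteEdges_adj] at hadj
          refine ⟨⟨hw, u, hu, hadj.1⟩, ?_⟩
          simp only [Set.mem_singleton_iff]
          rintro rfl
          exact hadj.2 (by simp)
        · rintro ⟨⟨hw, u, hu, hadj⟩, hwv⟩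
          simp only [Set.mem_singleton_iff] at hwv
          refine ⟨hw, u, hu, ?_⟩
          rw [hG', SimpleGraph.deleteEdges_adj]
          refine ⟨hadj, ?_⟩
          simp only [Set.mem_setOf_eq, Sym2.mem_iff]
          rintro (rfl | rfl)
          · exact hv.1 hu
          · exact hwv rfl
      refine ih G' (fun n => C (N + n)) ?_ ?_ ?_ ?_
      · intro n
        have hv : v ∈ bdry G (C (N + n)) := hvN (N + n) (Nat.le_add_right N n)
        have hve : v ∉ C (N + n) := hv.1
        have : G'.induce (C (N + n)) = G.induce (C (N + n)) := by
          ext a b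
          simp only [SimpleGraph.comap_adj, Function.Embedding.coe_subtype, hG',
            SimpleGraph.deleteEdges_adj, Set.mem_setOf_eq, Sym2.mem_iff, and_iff_left_iff_imp]
          rintro _ (rfl | rfl)
          · exact hve a.2
          · exact hve b.2
        unfold ConnSet
        rw [this]
        exact hconn (N + n)
      · intro n
        exact hdesc (N + n)
      · intro n
        have hv : v ∈ bdry G (C (N + n)) := hvN (N + n) (Nat.le_add_right N n)
        have heq := hbd' (N + n) hv
        have hfin := (hbd (N + n)).1
        constructor
        · rw [heq]; exact hfin.diff
        · rw [heq, Set.ncard_diff_singleton_of_mem hv]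
          have h1 : 0 < (bdry G (C (N + n))).ncard :=
            (Set.ncard_pos hfin).mpr ⟨v, hv⟩
          have h2 := (hbd (N + n)).2
          omega
      · obtain ⟨x, hx⟩ := hint
        exact ⟨x, Set.mem_iInter.mpr fun n => Set.mem_iInter.mp hx (N + n)⟩
    · push_neg at hB
      have hfin : ∀ w : V, ∃ M, ∀ n, M ≤ n → w ∉ bdry G (C n) := by
        intro w
        by_contra hcon
        push_neg at hcon
        obtain ⟨n₀, _, hw0⟩ := hcon 0
        obtain ⟨n, hn, hnot⟩ := hB w n₀
        apply hnot
        obtain ⟨m, hm, hwm⟩ := hcon n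
        obtain ⟨u, hu, hadj⟩ := hwm.2
        exact ⟨fun h => hw0.1 (C_mono hdesc hn h), u, C_mono hdesc hm hu, hadj⟩
      obtain ⟨x, hx⟩ := hint
      have hx' : ∀ n, x ∈ C n := fun n => Set.mem_iInter.mp hx n
      obtain ⟨w, hw0, hw1⟩ := Set.exists_of_ssubset (hdesc 0)
      obtain ⟨W⟩ := (hconn 0).preconnected ⟨w, hw0⟩ ⟨x, hx' 0⟩
      choose M hM using fun u : (C 0 : Set V) => hfin u
      set K := W.support.toFinset.sup M + 1 with hK
      obtain ⟨u, hu, hub⟩ := cross W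
        (fun h => hw1 (C_mono hdesc (by omega : 1 ≤ K) h)) (hx' K)
      exact hM u K (by
        have := Finset.le_sup (f := M) (List.mem_toFinset.mpr hu)
        omega) hub

theorem stmt19 (G : SimpleGraph V) (c : ℕ) (hc : 0 < c) (C : ℕ → Set V)
    (hconn : ∀ n, ConnSet G (C n))
    (hdesc : ∀ n, C (n + 1) ⊂ C n)
    (hbd : ∀ n, (bdry G (C n)).Finite ∧ (bdry G (C n)).ncard < c)
    (hint : (⋂ n, C n).Nonempty) :
    False :=
  aux c G C hconn hdesc hbd hint
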